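/- Setting δ = 0 in the TLS problem maximizes the focused current density: for all δ ≥ 0, the solution y(δ) of (L₁ᵀL₁ + δ²α²L₂ᵀL₂ + α²σ²I)y = L₁ᵀx₁ satisfies x₁ᵀL₁y(δ) ≤ x₁ᵀL₁y(0), with x₁ᵀL₁y(δ) = x₁ᵀL₁ỹ − δ²α²‖L₂ỹ‖₂² + O(δ⁴) for small δ. -/

import Mathlib

open Matrix Asymptotics Filter

section aux
variable {K : ℕ}

private lemma psd_smul {c : ℝ} (hc : 0 ≤ c) {M : Matrix (Fin K) (Fin K) ℝ}
    (hM : M.PosSemidef) : (c • M).PosSemidef := by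
  refine posSemidef_iff_dotProduct_mulVec.mpr ⟨?_, fun x => ?_⟩
  · unfold Matrix.IsHermitian
    rw [conjTranspose_smul, hM.1]
    simp
  · rw [smul_mulVec, dotProduct_smul]
    exact mul_nonneg hc (by simpa using hM.dotProduct_mulVec_nonneg x)

private lemma dot_sym {S : Matrix (Fin K) (Fin K) ℝ} (hS : Sᵀ = S) (u v : Fin K → ℝ) :
    u ⬝ᵥ S *ᵥ v = (S *ᵥ u) ⬝ᵥ v := by
  rw [dotProduct_mulVec]
  conv_lhs => rw [← hS, vecMul_transpose]

end aux

theorem stmt9 (N M K : ℕ) (L₁ : Matrix (Fin N) (Fin K) ℝ) (L₂ : Matrix (Fin M) (Fin K) ℝ)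
    (x₁ : Fin N → ℝ) (α σ : ℝ) (hα : 0 < α) (hσ : 0 < σ) :
    let A : ℝ → Matrix (Fin K) (Fin K) ℝ := fun δ =>
      L₁ᵀ * L₁ + (δ ^ 2 * α ^ 2) • (L₂ᵀ * L₂) + (α ^ 2 * σ ^ 2) • 1
    let y : ℝ → Fin K → ℝ := fun δ => (A δ)⁻¹.mulVec (L₁ᵀ.mulVec x₁)
    (∀ δ : ℝ, 0 ≤ δ → x₁ ⬝ᵥ L₁.mulVec (y δ) ≤ x₁ ⬝ᵥ L₁.mulVec (y 0)) ∧
    (fun δ : ℝ =>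
        x₁ ⬝ᵥ L₁.mulVec (y δ) -
          (x₁ ⬝ᵥ L₁.mulVec (y 0) - δ ^ 2 * α ^ 2 * ∑ m, ((L₂.mulVec (y 0)) m) ^ 2))
      =O[nhds 0] fun δ : ℝ => δ ^ 4 := by
  intro A y
  set b : Fin K → ℝ := L₁ᵀ *ᵥ x₁ with hb
  set C : Matrix (Fin K) (Fin K) ℝ := L₂ᵀ * L₂ with hCdef
  have hCps : C.PosSemidef := by
    have := posSemidef_conjTranspose_mul_self L₂
    rwa [conjTranspose_eq_transpose_of_trivial] at this
  have hL1ps : (L₁ᵀ * L₁).PosSemidef := by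
    have := posSemidef_conjTranspose_mul_self L₁
    rwa [conjTranspose_eq_transpose_of_trivial] at this
  have hOne : ((α ^ 2 * σ ^ 2) • (1 : Matrix (Fin K) (Fin K) ℝ)).PosDef := by
    rw [smul_one_eq_diagonal]
    exact Matrix.PosDef.diagonal (fun i => by positivity)
  have hApd : ∀ δ : ℝ, (A δ).PosDef := fun δ =>
    Matrix.PosDef.posSemidef_add (hL1ps.add (psd_smul (by positivity) hCps)) hOne
  have hdet : ∀ δ : ℝ, IsUnit (A δ).det := fun δ =>
    isUnit_iff_ne_zero.mpr (hApd δ).det_pos.ne'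
  have hAinv_sym : ∀ δ : ℝ, ((A δ)⁻¹)ᵀ = (A δ)⁻¹ := fun δ => by
    have := (hApd δ).inv.isHermitian
    rwa [Matrix.IsHermitian, conjTranspose_eq_transpose_of_trivial] at this
  have hAsym : ∀ δ : ℝ, (A δ)ᵀ = A δ := fun δ => by
    have := (hApd δ).isHermitian
    rwa [Matrix.IsHermitian, conjTranspose_eq_transpose_of_trivial] at this
  have hCsym : Cᵀ = C := by rw [hCdef, transpose_mul, transpose_transpose]
  have hAdelta : ∀ δ : ℝ, A δ = A 0 + (δ ^ 2 * α ^ 2) • C := by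
    intro δ
    show L₁ᵀ * L₁ + (δ ^ 2 * α ^ 2) • C + (α ^ 2 * σ ^ 2) • 1
        = (L₁ᵀ * L₁ + ((0:ℝ) ^ 2 * α ^ 2) • C + (α ^ 2 * σ ^ 2) • 1) + (δ ^ 2 * α ^ 2) • C
    norm_num
    abel
  have hinv1 : ∀ δ : ℝ, (A δ)⁻¹ = (A 0)⁻¹ - (δ ^ 2 * α ^ 2) • ((A 0)⁻¹ * C * (A δ)⁻¹) := by
    intro δ
    apply inv_eq_left_inv
    have step : ((A 0)⁻¹ - (δ ^ 2 * α ^ 2) • ((A 0)⁻¹ * C * (A δ)⁻¹)) * A δ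
        = (A 0)⁻¹ * (A 0 + (δ ^ 2 * α ^ 2) • C) - (δ ^ 2 * α ^ 2) • ((A 0)⁻¹ * C) := by
      rw [sub_mul, smul_mul_assoc, mul_assoc ((A 0)⁻¹ * C), nonsing_inv_mul _ (hdet δ),
        mul_one, ← hAdelta δ]
    rw [step, mul_add, nonsing_inv_mul _ (hdet 0), mul_smul_comm, add_sub_cancel_right]
  have hinv2 : ∀ δ : ℝ, (A δ)⁻¹ = (A 0)⁻¹ - (δ ^ 2 * α ^ 2) • ((A δ)⁻¹ * C * (A 0)⁻¹) := by
    intro δ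
    apply inv_eq_right_inv
    have step : A δ * ((A 0)⁻¹ - (δ ^ 2 * α ^ 2) • ((A δ)⁻¹ * C * (A 0)⁻¹))
        = (A 0 + (δ ^ 2 * α ^ 2) • C) * (A 0)⁻¹ - (δ ^ 2 * α ^ 2) • (C * (A 0)⁻¹) := by
      rw [mul_sub, mul_smul_comm, ← mul_assoc, ← mul_assoc, mul_nonsing_inv _ (hdet δ),
        one_mul, ← hAdelta δ]
    rw [step, add_mul, mul_nonsing_inv _ (hdet 0), smul_mul_assoc, add_sub_cancel_right]
  have hinv3 : ∀ δ : ℝ, (A δ)⁻¹ = (A 0)⁻¹ - (δ ^ 2 * α ^ 2) • ((A 0)⁻¹ * C * (A 0)⁻¹)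
      + ((δ ^ 2 * α ^ 2) * (δ ^ 2 * α ^ 2)) • ((A 0)⁻¹ * C * (A δ)⁻¹ * C * (A 0)⁻¹) := by
    intro δ
    conv_lhs => rw [hinv1 δ, hinv2 δ]
    simp only [mul_sub, mul_smul_comm, smul_sub, smul_smul, ← mul_assoc]
    abel
  have hxb : ∀ w : Fin K → ℝ, x₁ ⬝ᵥ L₁ *ᵥ w = b ⬝ᵥ w := by
    intro w
    rw [dotProduct_mulVec, ← mulVec_transpose, ← hb]
  have hnn : ∀ (δ : ℝ) (v : Fin K → ℝ), 0 ≤ v ⬝ᵥ ((A δ)⁻¹ *ᵥ v) := by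
    intro δ v; simpa using (hApd δ).inv.posSemidef.dotProduct_mulVec_nonneg v
  have hCnn : ∀ w : Fin K → ℝ, 0 ≤ w ⬝ᵥ (C *ᵥ w) := fun w => by simpa using hCps.dotProduct_mulVec_nonneg w
  have hub : ∀ (δ : ℝ) (v : Fin K → ℝ), v ⬝ᵥ ((A δ)⁻¹ *ᵥ v) ≤ v ⬝ᵥ ((A 0)⁻¹ *ᵥ v) := by
    intro δ v
    set w := (A δ)⁻¹ *ᵥ v with hw
    set u₀ := (A 0)⁻¹ *ᵥ v with hu0
    have h1 : A δ *ᵥ w = v := by rw [hw, mulVec_mulVec, mul_nonsing_inv _ (hdet δ), one_mulVec]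
    have h2 : A 0 *ᵥ u₀ = v := by rw [hu0, mulVec_mulVec, mul_nonsing_inv _ (hdet 0), one_mulVec]
    have e1 : w ⬝ᵥ (A 0 *ᵥ u₀) = w ⬝ᵥ v := by rw [h2]
    have e2 : u₀ ⬝ᵥ (A 0 *ᵥ w) = v ⬝ᵥ w := by rw [dot_sym (hAsym 0), h2]
    have e3 : u₀ ⬝ᵥ (A 0 *ᵥ u₀) = u₀ ⬝ᵥ v := by rw [h2]
    have e4 : w ⬝ᵥ v = w ⬝ᵥ (A 0 *ᵥ w) + (δ ^ 2 * α ^ 2) * (w ⬝ᵥ (C *ᵥ w)) := by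
      conv_lhs => rw [← h1, hAdelta δ]
      rw [add_mulVec, smul_mulVec, dotProduct_add, dotProduct_smul, smul_eq_mul]
    have key : 0 ≤ (w - u₀) ⬝ᵥ (A 0 *ᵥ (w - u₀)) := by
      simpa using (hApd 0).posSemidef.dotProduct_mulVec_nonneg (w - u₀)
    have expand : (w - u₀) ⬝ᵥ (A 0 *ᵥ (w - u₀))
        = w ⬝ᵥ (A 0 *ᵥ w) - u₀ ⬝ᵥ (A 0 *ᵥ w) - (w ⬝ᵥ (A 0 *ᵥ u₀) - u₀ ⬝ᵥ (A 0 *ᵥ u₀)) := by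
      rw [mulVec_sub, dotProduct_sub, sub_dotProduct, sub_dotProduct]
    have hs : 0 ≤ (δ ^ 2 * α ^ 2) * (w ⬝ᵥ (C *ᵥ w)) := mul_nonneg (by positivity) (hCnn w)
    have hc1 : v ⬝ᵥ w = w ⬝ᵥ v := dotProduct_comm _ _
    have hc2 : v ⬝ᵥ u₀ = u₀ ⬝ᵥ v := dotProduct_comm _ _
    linarith [key, expand, e1, e2, e3, e4, hs, hc1, hc2]
  have t1 : b ⬝ᵥ (((A 0)⁻¹ * C * (A 0)⁻¹) *ᵥ b)
      = ((A 0)⁻¹ *ᵥ b) ⬝ᵥ (C *ᵥ ((A 0)⁻¹ *ᵥ b)) := by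
    rw [← mulVec_mulVec, ← mulVec_mulVec, dot_sym (hAinv_sym 0)]
  have t2 : ∀ δ : ℝ, b ⬝ᵥ (((A 0)⁻¹ * C * (A δ)⁻¹ * C * (A 0)⁻¹) *ᵥ b)
      = (C *ᵥ ((A 0)⁻¹ *ᵥ b)) ⬝ᵥ ((A δ)⁻¹ *ᵥ (C *ᵥ ((A 0)⁻¹ *ᵥ b))) := by
    intro δ
    rw [← mulVec_mulVec, ← mulVec_mulVec, ← mulVec_mulVec, ← mulVec_mulVec,
      dot_sym (hAinv_sym 0), dot_sym hCsym]
  have hmain : ∀ δ : ℝ, b ⬝ᵥ ((A δ)⁻¹ *ᵥ b)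
      = b ⬝ᵥ ((A 0)⁻¹ *ᵥ b) - δ ^ 2 * α ^ 2 * (((A 0)⁻¹ *ᵥ b) ⬝ᵥ (C *ᵥ ((A 0)⁻¹ *ᵥ b)))
        + (δ ^ 2 * α ^ 2) * (δ ^ 2 * α ^ 2) *
          ((C *ᵥ ((A 0)⁻¹ *ᵥ b)) ⬝ᵥ ((A δ)⁻¹ *ᵥ (C *ᵥ ((A 0)⁻¹ *ᵥ b)))) := by
    intro δ
    conv_lhs => rw [hinv3 δ]
    rw [add_mulVec, sub_mulVec, smul_mulVec, smul_mulVec, dotProduct_add,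
      dotProduct_sub, dotProduct_smul, dotProduct_smul, smul_eq_mul, smul_eq_mul, t1, t2 δ]
  have hsum : ∑ m, ((L₂ *ᵥ ((A 0)⁻¹ *ᵥ b)) m) ^ 2
      = ((A 0)⁻¹ *ᵥ b) ⬝ᵥ (C *ᵥ ((A 0)⁻¹ *ᵥ b)) := by
    rw [hCdef, ← mulVec_mulVec, dotProduct_mulVec, vecMul_transpose]
    simp [dotProduct, pow_two]
  constructor
  · intro δ hδ
    show x₁ ⬝ᵥ L₁ *ᵥ ((A δ)⁻¹ *ᵥ b) ≤ x₁ ⬝ᵥ L₁ *ᵥ ((A 0)⁻¹ *ᵥ b)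
    rw [hxb, hxb]
    exact hub δ b
  · rw [Asymptotics.isBigO_iff]
    refine ⟨α ^ 4 * ((C *ᵥ ((A 0)⁻¹ *ᵥ b)) ⬝ᵥ ((A 0)⁻¹ *ᵥ (C *ᵥ ((A 0)⁻¹ *ᵥ b)))),
      Filter.Eventually.of_forall fun δ => ?_⟩
    have herr : x₁ ⬝ᵥ L₁ *ᵥ y δ - (x₁ ⬝ᵥ L₁ *ᵥ y 0 - δ ^ 2 * α ^ 2 * ∑ m, ((L₂ *ᵥ y 0) m) ^ 2)
        = (δ ^ 2 * α ^ 2) * (δ ^ 2 * α ^ 2) *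
          ((C *ᵥ ((A 0)⁻¹ *ᵥ b)) ⬝ᵥ ((A δ)⁻¹ *ᵥ (C *ᵥ ((A 0)⁻¹ *ᵥ b)))) := by
      show x₁ ⬝ᵥ L₁ *ᵥ ((A δ)⁻¹ *ᵥ b) - (x₁ ⬝ᵥ L₁ *ᵥ ((A 0)⁻¹ *ᵥ b)
          - δ ^ 2 * α ^ 2 * ∑ m, ((L₂ *ᵥ ((A 0)⁻¹ *ᵥ b)) m) ^ 2) = _
      rw [hxb, hxb, hsum, hmain δ]
      ring
    simp only [herr]
    have h1 : 0 ≤ (C *ᵥ ((A 0)⁻¹ *ᵥ b)) ⬝ᵥ ((A δ)⁻¹ *ᵥ (C *ᵥ ((A 0)⁻¹ *ᵥ b))) := hnn δ _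
    have h2 : (C *ᵥ ((A 0)⁻¹ *ᵥ b)) ⬝ᵥ ((A δ)⁻¹ *ᵥ (C *ᵥ ((A 0)⁻¹ *ᵥ b)))
        ≤ (C *ᵥ ((A 0)⁻¹ *ᵥ b)) ⬝ᵥ ((A 0)⁻¹ *ᵥ (C *ᵥ ((A 0)⁻¹ *ᵥ b))) := hub δ _
    rw [Real.norm_eq_abs, Real.norm_eq_abs,
      abs_of_nonneg (by positivity), abs_of_nonneg (show (0:ℝ) ≤ δ ^ 4 by positivity)]
    nlinarith [mul_le_mul_of_nonneg_left h2 (show (0:ℝ) ≤ δ ^ 4 * α ^ 4 by positivity)]
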